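/- arXiv:2601.09375 — 2 statements merged into one kernel-verified Lean document; each statement's English description precedes it below -/
import Mathlib

section
/- Let $u$ be a nonconstant inner function and $\varphi \in L^\infty(\mathbb{T})$ with $|\varphi| = 1$ a.e. on $\mathbb{T}$. Suppose $f = x \oplus y \in \mathcal{K}_u^\perp$ with $x \in uH^2$, $y \in H^2_-$ is a nonzero extremal vector for $D_\varphi$, i.e. $\|D_\varphi f\| = \|f\|$. Define $F(t) = \|D_\varphi(tx + y)\|^2 - \|tx + y\|^2$ for $t \in \mathbb{R}$. Then $F(t) = \alpha t^2 + 2\beta t + \gamma$ with $\alpha = \|D_\varphi x\|^2 - \|x\|^2 \leq 0$, $\beta = \mathrm{Re}\langle D_\varphi x, D_\varphi y\rangle$, $\gamma = \|D_\varphi y\|^2 - \|y\|^2$, and moreover $\beta = -\alpha$, $\gamma = \alpha$, so that $F(t) = \alpha(t-1)^2$. -/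
set_option synthInstance.maxHeartbeats 1000000
set_option maxHeartbeats 1000000

open MeasureTheory Complex Submodule

noncomputable section
namespace DTTO

instance fact2pi : Fact (0 < 2 * Real.pi) := ⟨by positivity⟩

/-- The unit circle, realized as `ℝ / 2πℤ`. -/
abbrev 𝕋 : Type := AddCircle (2 * Real.pi)

/-- Normalized Haar (arc-length) measure on the circle. -/
abbrev μ : Measure 𝕋 := AddCircle.haarAddCircle

/-- The Hilbert space `L²(𝕋)`. -/
abbrev L2 : Type := Lp ℂ 2 μ

/-- The Hardy space `H²`: the closed span in `L²` of the Fourier monomials `e^{int}`, `n ≥ 0`. -/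
def H2 : Submodule ℂ L2 :=
  (span ℂ (Set.range fun n : ℕ => fourierLp 2 (n : ℤ))).topologicalClosure

instance : CompleteSpace H2 :=
  (Submodule.isClosed_topologicalClosure _).isComplete.completeSpace_coe

/-- A boundary function is inner iff it is unimodular a.e. and its `L²` class lies in `H²`. -/
def IsInner (w : 𝕋 → ℂ) : Prop :=
  ∃ hw : MemLp w 2 μ, hw.toLp w ∈ H2 ∧ ∀ᵐ x ∂μ, ‖w x‖ = 1

/-- `w` is a nonconstant function (up to null sets). -/
def Nonconst (w : 𝕋 → ℂ) : Prop := ¬ ∃ c : ℂ, w =ᵐ[μ] fun _ => c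

/-- `M` is the operator of multiplication by `φ` on `L²`. -/
def IsMul (φ : 𝕋 → ℂ) (M : L2 →L[ℂ] L2) : Prop :=
  ∀ f : L2, (M f : 𝕋 → ℂ) =ᵐ[μ] fun x => φ x * f x

/-- The subspace `u·H²` (where `Mu` is multiplication by `u`). -/
def uH2 (Mu : L2 →L[ℂ] L2) : Submodule ℂ L2 := H2.map (Mu : L2 →ₗ[ℂ] L2)

/-- The model space `K_u = H² ⊖ uH²`. -/
def Ku (Mu : L2 →L[ℂ] L2) : Submodule ℂ L2 := H2 ⊓ (uH2 Mu)ᗮ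

instance (Mu : L2 →L[ℂ] L2) : CompleteSpace (Ku Mu) :=
  IsComplete.completeSpace_coe (IsClosed.isComplete (by
    have : (↑(Ku Mu) : Set L2) = ↑H2 ∩ ↑(uH2 Mu)ᗮ := rfl
    rw [this]
    exact (Submodule.isClosed_topologicalClosure _).inter (Submodule.isClosed_orthogonal _)))

/-- The dual truncated Toeplitz operator `D_φ = P_{K_u^⊥} M_φ |_{K_u^⊥}` as an operator
on `K_u^⊥`. -/
def Dphi (Mu Mphi : L2 →L[ℂ] L2) : ((Ku Mu)ᗮ : Submodule ℂ L2) →L[ℂ] ((Ku Mu)ᗮ : Submodule ℂ L2) :=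
  (orthogonalProjection (Ku Mu)ᗮ).comp (Mphi.comp (Ku Mu)ᗮ.subtypeL)

/-- The composition `P_{K_u^⊥} ∘ M_φ`, viewed as a map of `L²` (agreeing with `D_φ` on
`K_u^⊥`). -/
def DP (Mu Mphi : L2 →L[ℂ] L2) (v : L2) : L2 :=
  ↑(orthogonalProjection (Ku Mu)ᗮ (Mphi v))

/-- An operator is norm attaining if some nonzero vector realizes its operator norm. -/
def NormAttaining {E F : Type*} [NormedAddCommGroup E] [NormedAddCommGroup F]
    [NormedSpace ℂ E] [NormedSpace ℂ F] (T : E →L[ℂ] F) : Prop :=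
  ∃ x, x ≠ 0 ∧ ‖T x‖ = ‖T‖ * ‖x‖

/-! `D_φ` is a contraction (a projection after a unitary), so `F ≤ 0` everywhere, while
extremality gives `F(1) = 0`: a nonpositive quadratic vanishing at `1` has a double root there.
The cross term of `‖tx + y‖²` vanishes because `uH² ⊆ H²` is orthogonal to `H²₋`. -/

section Quadratic

variable {𝕜 E : Type*} [RCLike 𝕜] [NormedAddCommGroup E] [InnerProductSpace 𝕜 E]

lemma norm_ofReal_smul_add_sq (v w : E) (t : ℝ) :
    ‖(t : 𝕜) • v + w‖ ^ 2 = ‖v‖ ^ 2 * t ^ 2 + 2 * RCLike.re (inner 𝕜 v w) * t + ‖w‖ ^ 2 := by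
  rw [@norm_add_sq 𝕜, inner_smul_left, norm_smul, RCLike.conj_ofReal, RCLike.re_ofReal_mul,
    RCLike.norm_ofReal, mul_pow, sq_abs]
  ring

lemma eq_neg_and_eq_of_quadratic_nonpos {a b c : ℝ} (h : ∀ t, a * t ^ 2 + 2 * b * t + c ≤ 0)
    (h1 : a + 2 * b + c = 0) : b = -a ∧ c = a := by
  have hdisc : discrim (-a) (-2 * b) (-c) ≤ 0 :=
    discrim_le_zero fun t => by nlinarith [h t]
  have hab : (a + b) ^ 2 ≤ 0 := by
    rw [discrim, show c = -a - 2 * b by linarith] at hdisc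
    linarith
  have : a + b = 0 := pow_eq_zero_iff two_ne_zero |>.mp (le_antisymm hab (sq_nonneg _))
  constructor <;> linarith

theorem quadratic_defect_of_norm_map_eq (T : E →ₗ[𝕜] E) (hT : ∀ v, ‖T v‖ ≤ ‖v‖) {x y : E}
    (hxy : inner 𝕜 x y = 0) (hext : ‖T (x + y)‖ = ‖x + y‖) :
    ‖T x‖ ^ 2 - ‖x‖ ^ 2 ≤ 0 ∧
    RCLike.re (inner 𝕜 (T x) (T y)) = -(‖T x‖ ^ 2 - ‖x‖ ^ 2) ∧
    ‖T y‖ ^ 2 - ‖y‖ ^ 2 = ‖T x‖ ^ 2 - ‖x‖ ^ 2 ∧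
    (∀ t : ℝ, ‖T ((t : 𝕜) • x + y)‖ ^ 2 - ‖(t : 𝕜) • x + y‖ ^ 2
      = (‖T x‖ ^ 2 - ‖x‖ ^ 2) * t ^ 2 + 2 * RCLike.re (inner 𝕜 (T x) (T y)) * t
        + (‖T y‖ ^ 2 - ‖y‖ ^ 2)) ∧
    (∀ t : ℝ, ‖T ((t : 𝕜) • x + y)‖ ^ 2 - ‖(t : 𝕜) • x + y‖ ^ 2
      = (‖T x‖ ^ 2 - ‖x‖ ^ 2) * (t - 1) ^ 2) := by
  have hT_sq (v : E) : ‖T v‖ ^ 2 - ‖v‖ ^ 2 ≤ 0 :=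
    sub_nonpos.2 (pow_le_pow_left₀ (norm_nonneg _) (hT v) 2)
  have hF (t : ℝ) : ‖T ((t : 𝕜) • x + y)‖ ^ 2 - ‖(t : 𝕜) • x + y‖ ^ 2
      = (‖T x‖ ^ 2 - ‖x‖ ^ 2) * t ^ 2 + 2 * RCLike.re (inner 𝕜 (T x) (T y)) * t
        + (‖T y‖ ^ 2 - ‖y‖ ^ 2) := by
    rw [map_add, map_smul, norm_ofReal_smul_add_sq, norm_ofReal_smul_add_sq, hxy, map_zero]
    ring
  have hF_one := hF 1
  rw [RCLike.ofReal_one, one_smul, hext, sub_self] at hF_one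
  obtain ⟨hβ, hγ⟩ := eq_neg_and_eq_of_quadratic_nonpos (fun t => hF t ▸ hT_sq _)
    (by linarith)
  refine ⟨hT_sq x, hβ, hγ, hF, fun t => ?_⟩
  rw [hF, hβ, hγ]
  ring

end Quadratic

lemma Lp.norm_eq_of_ae_eq_mul_of_norm_eq_one {α : Type*} [MeasurableSpace α] {ν : Measure α}
    {p : ENNReal} {ψ : α → ℂ} (hψ : ∀ᵐ a ∂ν, ‖ψ a‖ = 1) {f g : Lp ℂ p ν}
    (hg : g =ᵐ[ν] fun a => ψ a * f a) : ‖g‖ = ‖f‖ := by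
  rw [Lp.norm_def, Lp.norm_def, eLpNorm_congr_ae hg]
  refine congrArg _ (eLpNorm_congr_norm_ae ?_)
  filter_upwards [hψ] with a ha
  rw [norm_mul, ha, one_mul]

lemma IsMul.norm_apply {φ : 𝕋 → ℂ} {M : L2 →L[ℂ] L2} (hM : IsMul φ M)
    (hφ : ∀ᵐ x ∂μ, ‖φ x‖ = 1) (f : L2) : ‖M f‖ = ‖f‖ :=
  Lp.norm_eq_of_ae_eq_mul_of_norm_eq_one hφ (hM f)

lemma DP_eq_starProjection_comp (Mu Mφ : L2 →L[ℂ] L2) :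
    DP Mu Mφ = (Ku Mu)ᗮ.starProjection ∘L Mφ :=
  rfl

lemma norm_DP_le {φ : 𝕋 → ℂ} (Mu : L2 →L[ℂ] L2) {Mφ : L2 →L[ℂ] L2} (hMφ : IsMul φ Mφ)
    (hφ : ∀ᵐ x ∂μ, ‖φ x‖ = 1) (v : L2) : ‖DP Mu Mφ v‖ ≤ ‖v‖ :=
  (norm_starProjection_apply_le _ _).trans_eq (hMφ.norm_apply hφ v)

def mulFourier (n : ℤ) : L2 →L[ℂ] L2 :=
  (ContinuousLinearMap.mul ℂ ℂ).holderL μ ⊤ 2 2 (fourierLp ⊤ n)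

lemma coeFn_mulFourier (n : ℤ) (f : L2) : mulFourier n f =ᵐ[μ] fun x => fourier n x * f x := by
  filter_upwards [(ContinuousLinearMap.mul ℂ ℂ).coeFn_holder (r := 2) (fourierLp ⊤ n) f,
    coeFn_fourierLp ⊤ n] with x hx hn
  rw [mulFourier, ContinuousLinearMap.holderL_apply_apply, hx, hn]
  rfl

lemma mulFourier_fourierLp (n m : ℤ) : mulFourier n (fourierLp 2 m) = fourierLp 2 (n + m) := by
  apply Lp.ext
  filter_upwards [coeFn_mulFourier n (fourierLp 2 m), coeFn_fourierLp 2 m,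
    coeFn_fourierLp 2 (n + m)] with x h h₂ h₃
  rw [h, h₂, h₃, fourier_add]

lemma H2_le_comap_of_fourierLp_mem (T : L2 →L[ℂ] L2) (h : ∀ n : ℕ, T (fourierLp 2 n) ∈ H2) :
    H2 ≤ H2.comap (T : L2 →ₗ[ℂ] L2) := by
  refine topologicalClosure_minimal _ ?_ (isClosed_topologicalClosure _ |>.preimage T.continuous)
  rw [span_le]
  rintro _ ⟨n, rfl⟩
  exact h n

lemma mulFourier_mem_H2 (n : ℕ) {f : L2} (hf : f ∈ H2) : mulFourier n f ∈ H2 := by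
  refine H2_le_comap_of_fourierLp_mem _ (fun m => ?_) hf
  rw [mulFourier_fourierLp]
  exact le_topologicalClosure _ (subset_span ⟨n + m, by push_cast; rfl⟩)

lemma IsInner.uH2_le_H2 {u : 𝕋 → ℂ} (hu : IsInner u) {Mu : L2 →L[ℂ] L2} (hMu : IsMul u Mu) :
    uH2 Mu ≤ H2 := by
  obtain ⟨hu_mem, hu_H2, -⟩ := hu
  have hMu_fourier (n : ℕ) : Mu (fourierLp 2 n) = mulFourier n (hu_mem.toLp u) := by
    apply Lp.ext
    filter_upwards [hMu (fourierLp 2 n), coeFn_fourierLp 2 (n : ℤ),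
      coeFn_mulFourier n (hu_mem.toLp u), hu_mem.coeFn_toLp] with x h₁ h₂ h₃ h₄
    rw [h₁, h₂, h₃, h₄, mul_comm]
  rintro _ ⟨f, hf, rfl⟩
  refine H2_le_comap_of_fourierLp_mem Mu (fun n => ?_) hf
  rw [hMu_fourier]
  exact mulFourier_mem_H2 n hu_H2

theorem stmt12_general (u φ : 𝕋 → ℂ) (hu : IsInner u)
    (Mu Mφ : L2 →L[ℂ] L2) (hMu : IsMul u Mu) (hMφ : IsMul φ Mφ)
    (hφuni : ∀ᵐ x ∂μ, ‖φ x‖ = 1)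
    (x y : L2) (hx : x ∈ uH2 Mu) (hy : y ∈ H2ᗮ)
    (hext : ‖DP Mu Mφ (x + y)‖ = ‖x + y‖) :
    ‖DP Mu Mφ x‖ ^ 2 - ‖x‖ ^ 2 ≤ 0 ∧
    (inner ℂ (DP Mu Mφ x) (DP Mu Mφ y) : ℂ).re = -(‖DP Mu Mφ x‖ ^ 2 - ‖x‖ ^ 2) ∧
    ‖DP Mu Mφ y‖ ^ 2 - ‖y‖ ^ 2 = ‖DP Mu Mφ x‖ ^ 2 - ‖x‖ ^ 2 ∧
    (∀ t : ℝ, ‖DP Mu Mφ ((t : ℂ) • x + y)‖ ^ 2 - ‖(t : ℂ) • x + y‖ ^ 2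
      = (‖DP Mu Mφ x‖ ^ 2 - ‖x‖ ^ 2) * t ^ 2
        + 2 * (inner ℂ (DP Mu Mφ x) (DP Mu Mφ y) : ℂ).re * t
        + (‖DP Mu Mφ y‖ ^ 2 - ‖y‖ ^ 2)) ∧
    (∀ t : ℝ, ‖DP Mu Mφ ((t : ℂ) • x + y)‖ ^ 2 - ‖(t : ℂ) • x + y‖ ^ 2
      = (‖DP Mu Mφ x‖ ^ 2 - ‖x‖ ^ 2) * (t - 1) ^ 2) := by
  have hxy : inner ℂ x y = 0 := (H2.mem_orthogonal y).mp hy x (hu.uH2_le_H2 hMu hx)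
  rw [DP_eq_starProjection_comp] at hext ⊢
  exact quadratic_defect_of_norm_map_eq ((Ku Mu)ᗮ.starProjection ∘L Mφ).toLinearMap
    (norm_DP_le Mu hMφ hφuni) hxy hext

/-- Quadratic extremality identities for `D_φ`: if `f = x ⊕ y` (with `x ∈ uH²`,
`y ∈ H²₋`) is a nonzero extremal vector for `D_φ`, then
`F(t) = ‖D_φ(tx+y)‖² − ‖tx+y‖²` equals `αt² + 2βt + γ` with `α ≤ 0`, `β = −α`, `γ = α`,
so that `F(t) = α(t−1)²`. -/
theorem stmt12 (u φ : 𝕋 → ℂ) (hu : IsInner u) (hnc : Nonconst u)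
    (Mu Mφ : L2 →L[ℂ] L2) (hMu : IsMul u Mu) (hMφ : IsMul φ Mφ)
    (hφuni : ∀ᵐ x ∂μ, ‖φ x‖ = 1)
    (x y : L2) (hx : x ∈ uH2 Mu) (hy : y ∈ H2ᗮ) (hne : x + y ≠ 0)
    (hext : ‖DP Mu Mφ (x + y)‖ = ‖x + y‖) :
    ‖DP Mu Mφ x‖ ^ 2 - ‖x‖ ^ 2 ≤ 0 ∧
    (inner ℂ (DP Mu Mφ x) (DP Mu Mφ y) : ℂ).re = -(‖DP Mu Mφ x‖ ^ 2 - ‖x‖ ^ 2) ∧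
    ‖DP Mu Mφ y‖ ^ 2 - ‖y‖ ^ 2 = ‖DP Mu Mφ x‖ ^ 2 - ‖x‖ ^ 2 ∧
    (∀ t : ℝ, ‖DP Mu Mφ ((t : ℂ) • x + y)‖ ^ 2 - ‖(t : ℂ) • x + y‖ ^ 2
      = (‖DP Mu Mφ x‖ ^ 2 - ‖x‖ ^ 2) * t ^ 2
        + 2 * (inner ℂ (DP Mu Mφ x) (DP Mu Mφ y) : ℂ).re * t
        + (‖DP Mu Mφ y‖ ^ 2 - ‖y‖ ^ 2)) ∧
    (∀ t : ℝ, ‖DP Mu Mφ ((t : ℂ) • x + y)‖ ^ 2 - ‖(t : ℂ) • x + y‖ ^ 2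
      = (‖DP Mu Mφ x‖ ^ 2 - ‖x‖ ^ 2) * (t - 1) ^ 2) :=
  stmt12_general u φ hu Mu Mφ hMu hMφ hφuni x y hx hy hext
end DTTO
end
end

section
/- Let $P$ be an orthogonal projection on a complex Hilbert space $H$, let $a, b \in H$ with $a \perp b$, and suppose $\|P(a+b)\| = \|a+b\|$. Define $F(t) = \|P(ta+b)\|^2 - \|ta+b\|^2$. Then $F(t) = (\|Pa\|^2 - \|a\|^2)(t-1)^2 \le 0$ for all real $t$; in particular $\mathrm{Re}\langle Pa, Pb\rangle = \|a\|^2 - \|Pa\|^2$ and $\|Pb\|^2 - \|b\|^2 = \|Pa\|^2 - \|a\|^2$. -/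
/-!
Since `a ⟂ b`, `F(t) = ‖P(ta+b)‖² - ‖ta+b‖²` is the real quadratic `A t² + 2 G t + B` with
`A = ‖Pa‖² - ‖a‖²`, `G = Re⟪Pa, Pb⟫`, `B = ‖Pb‖² - ‖b‖²`. An orthogonal projection is a
contraction, so `F ≤ 0`, while `F(1) = 0` by hypothesis. Hence `F(1 + s) = A s² + 2 (A + G) s ≤ 0`
for all `s`; its discriminant `4 (A + G)²` must be nonpositive, which forces `G = -A`, and then
`B = A` from `F(1) = 0`.
-/

open RCLike

section InnerProduct

variable {𝕜 E : Type*} [RCLike 𝕜] [NormedAddCommGroup E] [InnerProductSpace 𝕜 E]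

theorem norm_ofReal_smul_add_sq (t : ℝ) (x y : E) :
    ‖(t : 𝕜) • x + y‖ ^ 2 = t ^ 2 * ‖x‖ ^ 2 + 2 * t * re (inner 𝕜 x y) + ‖y‖ ^ 2 := by
  rw [@norm_add_sq 𝕜, inner_smul_left, conj_ofReal, re_ofReal_mul, norm_smul, norm_ofReal,
    mul_pow, sq_abs]
  ring

theorem LinearMap.IsSymmetric.norm_map_le_of_isIdempotentElem {P : E →ₗ[𝕜] E}
    (hsym : P.IsSymmetric) (hidem : IsIdempotentElem P) (v : E) : ‖P v‖ ≤ ‖v‖ := by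
  have hsq : ‖P v‖ ^ 2 = re (inner 𝕜 v (P v)) := by
    rw [← inner_self_eq_norm_sq (𝕜 := 𝕜), hsym, ← Module.End.mul_apply, hidem.eq]
  have hcs : ‖P v‖ ^ 2 ≤ ‖v‖ * ‖P v‖ := hsq ▸ (re_le_norm _).trans (norm_inner_le_norm v (P v))
  nlinarith [norm_nonneg (P v), norm_nonneg v]

theorem norm_map_ofReal_smul_add_sq_sub_norm_sq (P : E →L[𝕜] E) {a b : E}
    (hab : inner 𝕜 a b = 0) (t : ℝ) :
    ‖P ((t : 𝕜) • a + b)‖ ^ 2 - ‖(t : 𝕜) • a + b‖ ^ 2 =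
      (‖P a‖ ^ 2 - ‖a‖ ^ 2) * t ^ 2 + 2 * re (inner 𝕜 (P a) (P b)) * t +
        (‖P b‖ ^ 2 - ‖b‖ ^ 2) := by
  rw [map_add, map_smul, norm_ofReal_smul_add_sq, norm_ofReal_smul_add_sq, hab, map_zero]
  ring

end InnerProduct

theorem eq_of_forall_quadratic_nonpos_of_eq_zero_at_one {A G B : ℝ}
    (hle : ∀ t, A * t ^ 2 + 2 * G * t + B ≤ 0) (hone : A + 2 * G + B = 0) : G = -A ∧ B = A := by
  have hdiscrim : discrim A (2 * (A + G)) 0 ≤ 0 :=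
    discrim_le_zero_of_nonpos fun s ↦ by nlinarith [hle (s + 1)]
  have hAG : A + G = 0 := by
    rw [discrim] at hdiscrim
    nlinarith [sq_nonneg (A + G)]
  constructor <;> linarith

/-- Quadratic extremality identity for an orthogonal projection P: if a ⟂ b and
‖P(a+b)‖ = ‖a+b‖, then F(t) = ‖P(ta+b)‖² − ‖ta+b‖² collapses to (‖Pa‖²−‖a‖²)(t−1)² ≤ 0,
and the mixed-term identities hold. -/
theorem stmt13 {H : Type*} [NormedAddCommGroup H] [InnerProductSpace ℂ H]
    (P : H →L[ℂ] H) (hidem : P * P = P)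
    (hsa : ∀ v w : H, (inner ℂ (P v) w : ℂ) = inner ℂ v (P w))
    (a b : H) (hab : (inner ℂ a b : ℂ) = 0)
    (hext : ‖P (a + b)‖ = ‖a + b‖) :
    (∀ t : ℝ, ‖P ((t : ℂ) • a + b)‖ ^ 2 - ‖(t : ℂ) • a + b‖ ^ 2
        = (‖P a‖ ^ 2 - ‖a‖ ^ 2) * (t - 1) ^ 2) ∧
    (∀ t : ℝ, ‖P ((t : ℂ) • a + b)‖ ^ 2 - ‖(t : ℂ) • a + b‖ ^ 2 ≤ 0) ∧
    (inner ℂ (P a) (P b) : ℂ).re = ‖a‖ ^ 2 - ‖P a‖ ^ 2 ∧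
    ‖P b‖ ^ 2 - ‖b‖ ^ 2 = ‖P a‖ ^ 2 - ‖a‖ ^ 2 := by
  -- stated for `ℂ` so that the coercion `ℝ → ℂ` matches the statement's `Complex.ofReal`
  have hF : ∀ t : ℝ, ‖P ((t : ℂ) • a + b)‖ ^ 2 - ‖(t : ℂ) • a + b‖ ^ 2 =
      (‖P a‖ ^ 2 - ‖a‖ ^ 2) * t ^ 2 + 2 * (inner ℂ (P a) (P b) : ℂ).re * t +
        (‖P b‖ ^ 2 - ‖b‖ ^ 2) :=
    norm_map_ofReal_smul_add_sq_sub_norm_sq (𝕜 := ℂ) P hab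
  have hcontr : ∀ v, ‖P v‖ ≤ ‖v‖ :=
    LinearMap.IsSymmetric.norm_map_le_of_isIdempotentElem (P := (P : H →ₗ[ℂ] H)) hsa
      (congrArg ContinuousLinearMap.toLinearMap hidem)
  have hle : ∀ t : ℝ, ‖P ((t : ℂ) • a + b)‖ ^ 2 - ‖(t : ℂ) • a + b‖ ^ 2 ≤ 0 := fun t ↦
    sub_nonpos.mpr (pow_le_pow_left₀ (norm_nonneg _) (hcontr _) 2)
  have hone := hF 1
  simp only [Complex.ofReal_one, one_smul, hext, sub_self, one_pow, mul_one] at hone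
  obtain ⟨hG, hB⟩ :=
    eq_of_forall_quadratic_nonpos_of_eq_zero_at_one (fun t ↦ hF t ▸ hle t) hone.symm
  refine ⟨fun t ↦ ?_, hle, by linarith, hB⟩
  rw [hF, hG, hB]
  ring
end
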